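/- arXiv:1209.0544 — 4 statements merged into one kernel-verified Lean document; each statement's English description precedes it below -/
import Mathlib

section
/- Let n ≥ 3 and let f : ℝⁿ → ℝ be a continuous nonnegative function such that the limit A₀ = lim_{R→∞} (1/log R) ∫₁^R ρ^{1-n} (∫_{B_ρ(0)} f dx) dρ exists and is finite. Then for every x₀ ∈ ℝⁿ, lim_{R→∞} (1/log R) ∫₁^R ρ^{1-n} (∫_{B_ρ(x₀)} f dx) dρ = A₀. -/
/-!
Shifting the center by `d = ‖x₀‖` moves each ball between the concentric balls of radii `ρ ± d`,
so the two weighted masses are squeezed by shifts of each other. For large `ρ` the weight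
`ρ^{1-n}` changes by a factor arbitrarily close to `1` under a shift by `d`, a shift of the
upper limit `R` does not change `log R` asymptotically, and the contribution of any bounded
range of radii is killed by the factor `(log R)⁻¹`.
-/

open MeasureTheory Metric Filter Real Topology

noncomputable def logAverage (φ : ℝ → ℝ) (R : ℝ) : ℝ :=
  (log R)⁻¹ * ∫ ρ in (1 : ℝ)..R, φ ρ

lemma logAverage_const_mul (C : ℝ) (φ : ℝ → ℝ) (R : ℝ) :
    logAverage (fun ρ => C * φ ρ) R = C * logAverage φ R := by
  simp only [logAverage, intervalIntegral.integral_const_mul]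
  ring

lemma logAverage_eventuallyEq (φ : ℝ → ℝ) :
    (fun R => (log R)⁻¹ * ∫ ρ in Set.Ioc 1 R, φ ρ) =ᶠ[atTop] logAverage φ := by
  filter_upwards [eventually_ge_atTop 1] with R hR
  rw [logAverage, intervalIntegral.integral_of_le hR]

lemma tendsto_log_add_div_log (d : ℝ) :
    Tendsto (fun R => log (R + d) / log R) atTop (𝓝 1) := by
  have h := ((tendsto_log_comp_add_sub_log d).div_atTop tendsto_log_atTop).const_add 1
  rw [add_zero] at h
  refine h.congr' ?_
  filter_upwards [eventually_gt_atTop 1] with R hR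
  have := (log_pos hR).ne'
  field_simp
  ring

lemma tendsto_inv_log_mul_add_integral_add {ψ : ℝ → ℝ} {A : ℝ}
    (hψ : Tendsto (logAverage ψ) atTop (𝓝 A)) (K d : ℝ) :
    Tendsto (fun R => (log R)⁻¹ * (K + ∫ ρ in (1 : ℝ)..R + d, ψ ρ)) atTop (𝓝 A) := by
  have hK : Tendsto (fun R => (log R)⁻¹ * K) atTop (𝓝 0) := by
    simpa using tendsto_log_atTop.inv_tendsto_atTop.mul_const K
  have hshift := (tendsto_log_add_div_log d).mul
    (hψ.comp (tendsto_atTop_add_const_right atTop d tendsto_id))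
  have h := hK.add hshift
  rw [one_mul, zero_add] at h
  refine h.congr' ?_
  filter_upwards [eventually_gt_atTop 1, eventually_gt_atTop (1 - d)] with R hR hRd
  have := (log_pos hR).ne'
  have := (log_pos (by linarith : 1 < R + d)).ne'
  simp only [Function.comp_apply, id, logAverage]
  field_simp

lemma exists_integral_le_add_integral_add {φ ψ : ℝ → ℝ} {d : ℝ}
    (hφ : ∀ b, 1 ≤ b → IntervalIntegrable φ volume 1 b)
    (hψ : ∀ b, 1 ≤ b → IntervalIntegrable ψ volume 1 b)
    (hle : ∀ᶠ ρ in atTop, φ ρ ≤ ψ (ρ + d)) :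
    ∃ K, ∀ᶠ R in atTop, ∫ ρ in (1 : ℝ)..R, φ ρ ≤ K + ∫ ρ in (1 : ℝ)..R + d, ψ ρ := by
  obtain ⟨M, hM⟩ := eventually_atTop.1
    (hle.and ((eventually_ge_atTop 1).and (eventually_ge_atTop (1 - d))))
  obtain ⟨-, hM1, hMd⟩ := hM M le_rfl
  refine ⟨(∫ ρ in (1 : ℝ)..M, φ ρ) - ∫ ρ in (1 : ℝ)..M + d, ψ ρ, ?_⟩
  filter_upwards [eventually_ge_atTop M] with R hR
  have hφMR : IntervalIntegrable φ volume M R := (hφ M hM1).symm.trans (hφ R (hM1.trans hR))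
  have hψMR : IntervalIntegrable ψ volume (M + d) (R + d) :=
    (hψ (M + d) (by linarith)).symm.trans (hψ (R + d) (by linarith))
  have htail : ∫ ρ in M..R, φ ρ ≤ ∫ ρ in M + d..R + d, ψ ρ := by
    rw [← intervalIntegral.integral_comp_add_right]
    refine intervalIntegral.integral_mono_on hR hφMR ?_ fun ρ hρ => (hM ρ hρ.1).1
    simpa using hψMR.comp_add_right d
  rw [← intervalIntegral.integral_add_adjacent_intervals (hφ M hM1) hφMR,
    ← intervalIntegral.integral_add_adjacent_intervals (hψ (M + d) (by linarith)) hψMR]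
  linarith

section Comparison

variable {φ ψ : ℝ → ℝ} {d A a : ℝ}
  (hφ : ∀ b, 1 ≤ b → IntervalIntegrable φ volume 1 b)
  (hψ : ∀ b, 1 ≤ b → IntervalIntegrable ψ volume 1 b)
  (hle : ∀ᶠ ρ in atTop, φ ρ ≤ ψ (ρ + d))
include hφ hψ hle

lemma eventually_logAverage_lt (hψA : Tendsto (logAverage ψ) atTop (𝓝 A)) (ha : A < a) :
    ∀ᶠ R in atTop, logAverage φ R < a := by
  obtain ⟨K, hK⟩ := exists_integral_le_add_integral_add hφ hψ hle
  filter_upwards [hK, (tendsto_inv_log_mul_add_integral_add hψA K d).eventually_lt_const ha,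
    eventually_gt_atTop 1] with R hKR haR hR
  exact (mul_le_mul_of_nonneg_left hKR (inv_nonneg.2 (log_nonneg hR.le))).trans_lt haR

lemma eventually_lt_logAverage (hφA : Tendsto (logAverage φ) atTop (𝓝 A)) (ha : a < A) :
    ∀ᶠ R in atTop, a < logAverage ψ R := by
  obtain ⟨K, hK⟩ := exists_integral_le_add_integral_add hφ hψ hle
  have hK' : ∀ᶠ R in atTop, -K + ∫ ρ in (1 : ℝ)..R + -d, φ ρ ≤ ∫ ρ in (1 : ℝ)..R, ψ ρ := by
    filter_upwards [(tendsto_atTop_add_const_right atTop (-d) tendsto_id).eventually hK]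
      with R hR
    rw [id, neg_add_cancel_right] at hR
    linarith
  filter_upwards [hK', (tendsto_inv_log_mul_add_integral_add hφA (-K) (-d)).eventually_const_lt ha,
    eventually_gt_atTop 1] with R hKR haR hR
  exact haR.trans_le (mul_le_mul_of_nonneg_left hKR (inv_nonneg.2 (log_nonneg hR.le)))

end Comparison

lemma eventually_inv_pow_le_mul_inv_pow_add (k : ℕ) (d : ℝ) {C : ℝ} (hC : 1 < C) :
    ∀ᶠ ρ in atTop, (ρ ^ k)⁻¹ ≤ C * ((ρ + d) ^ k)⁻¹ := by
  have hratio : Tendsto (fun ρ : ℝ => (1 + d / ρ) ^ k) atTop (𝓝 1) := by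
    simpa using (((tendsto_const_nhds (x := d)).div_atTop tendsto_id).const_add 1).pow k
  filter_upwards [hratio.eventually_lt_const hC, eventually_gt_atTop 0,
    eventually_gt_atTop (-d)] with ρ hρC hρ hdρ
  have hρd : 0 < ρ + d := by linarith
  have hpow : (ρ ^ k)⁻¹ * (ρ + d) ^ k = (1 + d / ρ) ^ k := by
    rw [← div_eq_inv_mul, ← div_pow]
    congr 1
    field_simp
  rw [le_mul_inv_iff₀ (by positivity), hpow]
  exact hρC.le

lemma eventually_inv_pow_mul_le {G H : ℝ → ℝ} (k : ℕ) {d C : ℝ} (hG0 : ∀ ρ, 0 ≤ G ρ)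
    (hHG : ∀ ρ, H ρ ≤ G (ρ + d)) (hC : 1 < C) :
    ∀ᶠ ρ in atTop, (ρ ^ k)⁻¹ * H ρ ≤ C * (((ρ + d) ^ k)⁻¹ * G (ρ + d)) := by
  filter_upwards [eventually_inv_pow_le_mul_inv_pow_add k d hC, eventually_gt_atTop 0]
    with ρ hw hρ
  calc (ρ ^ k)⁻¹ * H ρ ≤ (ρ ^ k)⁻¹ * G (ρ + d) :=
        mul_le_mul_of_nonneg_left (hHG ρ) (by positivity)
    _ ≤ C * ((ρ + d) ^ k)⁻¹ * G (ρ + d) := mul_le_mul_of_nonneg_right hw (hG0 _)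
    _ = C * (((ρ + d) ^ k)⁻¹ * G (ρ + d)) := mul_assoc ..

lemma Monotone.intervalIntegrable_inv_pow_mul {G : ℝ → ℝ} (hG : Monotone G) (k : ℕ) {b : ℝ}
    (hb : 1 ≤ b) : IntervalIntegrable (fun ρ => (ρ ^ k)⁻¹ * G ρ) volume 1 b := by
  refine hG.intervalIntegrable.continuousOn_mul ((continuousOn_id.pow k).inv₀ fun ρ hρ => ?_)
  rw [Set.uIcc_of_le hb] at hρ
  exact pow_ne_zero k (zero_lt_one.trans_le hρ.1).ne'

lemma exists_one_lt_mul_lt {A a : ℝ} (h : A < a) : ∃ C, 1 < C ∧ C * A < a := by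
  have hcont : Tendsto (fun C : ℝ => C * A) (𝓝[>] 1) (𝓝 A) := by
    simpa using ((continuous_mul_const A).tendsto 1).mono_left nhdsWithin_le_nhds
  exact ((hcont.eventually_lt_const h).and self_mem_nhdsWithin).exists.imp
    fun C hC => ⟨hC.2, hC.1⟩

theorem tendsto_logAverage_of_le_add {G H : ℝ → ℝ} {k : ℕ} {d A : ℝ}
    (hG : Monotone G) (hH : Monotone H) (hG0 : ∀ ρ, 0 ≤ G ρ) (hH0 : ∀ ρ, 0 ≤ H ρ)
    (hHG : ∀ ρ, H ρ ≤ G (ρ + d)) (hGH : ∀ ρ, G ρ ≤ H (ρ + d))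
    (hA : Tendsto (logAverage fun ρ => (ρ ^ k)⁻¹ * G ρ) atTop (𝓝 A)) :
    Tendsto (logAverage fun ρ => (ρ ^ k)⁻¹ * H ρ) atTop (𝓝 A) := by
  have hGi := fun b => hG.intervalIntegrable_inv_pow_mul k (b := b)
  have hHi := fun b => hH.intervalIntegrable_inv_pow_mul k (b := b)
  refine tendsto_order.2 ⟨fun a ha => ?_, fun a ha => ?_⟩
  · obtain ⟨C, hC, haC⟩ := exists_one_lt_mul_lt ha
    filter_upwards [eventually_lt_logAverage hGi (fun b hb => (hHi b hb).const_mul C)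
      (eventually_inv_pow_mul_le k hH0 hGH hC) hA haC] with R hR
    rw [logAverage_const_mul] at hR
    exact lt_of_mul_lt_mul_left hR (by linarith)
  · obtain ⟨C, hC, hAC⟩ := exists_one_lt_mul_lt ha
    refine eventually_logAverage_lt hHi (fun b hb => (hGi b hb).const_mul C)
      (eventually_inv_pow_mul_le k hG0 hHG hC) ?_ hAC
    exact (hA.const_mul C).congr fun R => (logAverage_const_mul C _ R).symm

lemma setIntegral_ball_le_setIntegral_ball {X : Type*} [PseudoMetricSpace X] [ProperSpace X]
    [MeasurableSpace X] {μ : Measure X} {f : X → ℝ} (hf : LocallyIntegrable f μ)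
    (hf0 : ∀ x, 0 ≤ f x) {x y : X} {r s : ℝ} (h : r + dist x y ≤ s) :
    ∫ z in ball x r, f z ∂μ ≤ ∫ z in ball y s, f z ∂μ :=
  setIntegral_mono_set
    ((hf.integrableOn_isCompact (isCompact_closedBall y s)).mono_set ball_subset_closedBall)
    (Eventually.of_forall hf0) (ball_subset_ball' h).eventuallyLE

theorem stmt_0_general (n : ℕ)
    (f : EuclideanSpace ℝ (Fin n) → ℝ) (hf : Continuous f) (hf0 : ∀ x, 0 ≤ f x)
    (A₀ : ℝ)
    (hA : Tendsto (fun R : ℝ => (Real.log R)⁻¹ *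
        ∫ ρ in Set.Ioc (1:ℝ) R, (ρ ^ (n-1))⁻¹ * ∫ x in ball (0 : EuclideanSpace ℝ (Fin n)) ρ, f x)
      atTop (nhds A₀)) :
    ∀ x₀ : EuclideanSpace ℝ (Fin n),
      Tendsto (fun R : ℝ => (Real.log R)⁻¹ *
          ∫ ρ in Set.Ioc (1:ℝ) R, (ρ ^ (n-1))⁻¹ * ∫ x in ball x₀ ρ, f x)
        atTop (nhds A₀) := by
  intro x₀
  have hfi : LocallyIntegrable f volume := hf.locallyIntegrable
  have hmono : ∀ c : EuclideanSpace ℝ (Fin n), Monotone fun ρ => ∫ x in ball c ρ, f x :=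
    fun c r s hrs => setIntegral_ball_le_setIntegral_ball hfi hf0 (by rwa [dist_self, add_zero])
  have hnonneg : ∀ (c : EuclideanSpace ℝ (Fin n)) ρ, 0 ≤ ∫ x in ball c ρ, f x :=
    fun c ρ => integral_nonneg hf0
  refine (tendsto_logAverage_of_le_add (hmono 0) (hmono x₀) (hnonneg 0) (hnonneg x₀)
    (fun ρ => setIntegral_ball_le_setIntegral_ball hfi hf0 le_rfl)
    (fun ρ => setIntegral_ball_le_setIntegral_ball hfi hf0 (by rw [dist_comm]))
    (hA.congr' (logAverage_eventuallyEq _))).congr' (logAverage_eventuallyEq _).symm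

theorem stmt_0 (n : ℕ) (hn : 3 ≤ n)
    (f : EuclideanSpace ℝ (Fin n) → ℝ) (hf : Continuous f) (hf0 : ∀ x, 0 ≤ f x)
    (A₀ : ℝ)
    (hA : Tendsto (fun R : ℝ => (Real.log R)⁻¹ *
        ∫ ρ in Set.Ioc (1:ℝ) R, (ρ ^ (n-1))⁻¹ * ∫ x in ball (0 : EuclideanSpace ℝ (Fin n)) ρ, f x)
      atTop (nhds A₀)) :
    ∀ x₀ : EuclideanSpace ℝ (Fin n),
      Tendsto (fun R : ℝ => (Real.log R)⁻¹ *
          ∫ ρ in Set.Ioc (1:ℝ) R, (ρ ^ (n-1))⁻¹ * ∫ x in ball x₀ ρ, f x)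
        atTop (nhds A₀) :=
  stmt_0_general n f hf hf0 A₀ hA
end

section
/- Let n ≥ 3 and let f : ℝⁿ → ℝ be continuous and nonnegative. If there is A₀ ∈ (0,∞) with lim_{R→∞} (1/log R) ∫₁^R ρ^{1-n} (∫_{B_ρ(0)} f dx) dρ = A₀, then there exists R₁ > 1 such that ∫_{B_ρ(0)} f dx ≥ ((n-2)/2) A₀ log ρ for all ρ ≥ R₁; in particular ∫_{B_ρ(0)} f dx → ∞ as ρ → ∞. -/
open MeasureTheory Metric Filter Real

/-! Since `I ρ = ∫_{B_ρ} f` is nondecreasing and `∫₁^∞ ρ^{1-n} dρ = 1/(n-2)`, the weighted integral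
`∫₁^R ρ^{1-n} I ρ dρ` is at most `I R / (n-2)`. Once the logarithmic average exceeds `A₀/2`,
this gives `I R ≥ (n-2)/2 · A₀ · log R`, which tends to infinity. -/

theorem setIntegral_Ioc_one_inv_pow_le {k : ℕ} (hk : 2 ≤ k) (R : ℝ) :
    ∫ ρ in Set.Ioc 1 R, (ρ ^ k)⁻¹ ≤ 1 / ((k : ℝ) - 1) := by
  have hk' : (2 : ℝ) ≤ k := by exact_mod_cast hk
  have hexp : -(k : ℝ) < -1 := by linarith
  have hint : IntegrableOn (fun ρ : ℝ => ρ ^ (-(k : ℝ))) (Set.Ioi 1) :=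
    integrableOn_Ioi_rpow_of_lt hexp one_pos
  calc ∫ ρ in Set.Ioc 1 R, (ρ ^ k)⁻¹
      = ∫ ρ in Set.Ioc 1 R, ρ ^ (-(k : ℝ)) :=
        setIntegral_congr_fun measurableSet_Ioc fun ρ hρ => by
          rw [rpow_neg (zero_le_one.trans hρ.1.le), rpow_natCast]
    _ ≤ ∫ ρ in Set.Ioi 1, ρ ^ (-(k : ℝ)) :=
        setIntegral_mono_set hint
          ((ae_restrict_mem measurableSet_Ioi).mono fun ρ hρ =>
            rpow_nonneg (zero_le_one.trans hρ.le) _)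
          Set.Ioc_subset_Ioi_self.eventuallyLE
    _ = 1 / ((k : ℝ) - 1) := by
        rw [integral_Ioi_rpow_of_lt hexp one_pos, one_rpow, div_eq_div_iff (by linarith) (by linarith)]
        ring

theorem setIntegral_Ioc_one_inv_pow_mul_le {k : ℕ} (hk : 2 ≤ k) {I : ℝ → ℝ} (hI : Monotone I)
    {R : ℝ} (hR : 0 ≤ I R) :
    ∫ ρ in Set.Ioc 1 R, (ρ ^ k)⁻¹ * I ρ ≤ I R / ((k : ℝ) - 1) := by
  have hpos : ∀ ρ ∈ Set.Ioc (1 : ℝ) R, 0 ≤ (ρ ^ k)⁻¹ := fun ρ hρ =>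
    inv_nonneg.mpr (pow_nonneg (zero_le_one.trans hρ.1.le) k)
  have hcont : ContinuousOn (fun ρ : ℝ => (ρ ^ k)⁻¹) (Set.Icc 1 R) :=
    (continuousOn_pow k).inv₀ fun ρ hρ => pow_ne_zero k (one_pos.trans_le hρ.1).ne'
  have hint : IntegrableOn (fun ρ : ℝ => (ρ ^ k)⁻¹ * I ρ) (Set.Ioc 1 R) :=
    ((hI.monotoneOn _).integrableOn_isCompact isCompact_Icc |>.continuousOn_mul hcont
      isCompact_Icc).mono_set Set.Ioc_subset_Icc_self
  have hint' : IntegrableOn (fun ρ : ℝ => (ρ ^ k)⁻¹) (Set.Ioc 1 R) :=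
    (hcont.integrableOn_compact isCompact_Icc).mono_set Set.Ioc_subset_Icc_self
  calc ∫ ρ in Set.Ioc 1 R, (ρ ^ k)⁻¹ * I ρ
      ≤ ∫ ρ in Set.Ioc 1 R, (ρ ^ k)⁻¹ * I R :=
        setIntegral_mono_on hint (hint'.mul_const _) measurableSet_Ioc fun ρ hρ =>
          mul_le_mul_of_nonneg_left (hI hρ.2) (hpos ρ hρ)
    _ = (∫ ρ in Set.Ioc 1 R, (ρ ^ k)⁻¹) * I R := integral_mul_const _ _
    _ ≤ 1 / ((k : ℝ) - 1) * I R :=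
        mul_le_mul_of_nonneg_right (setIntegral_Ioc_one_inv_pow_le hk R) hR
    _ = I R / ((k : ℝ) - 1) := by ring

theorem monotone_setIntegral_ball {E : Type*} [MetricSpace E] [ProperSpace E] [MeasurableSpace E]
    {μ : Measure E} {f : E → ℝ} (hf : LocallyIntegrable f μ) (hf0 : ∀ x, 0 ≤ f x) (c : E) :
    Monotone fun r => ∫ x in ball c r, f x ∂μ := fun _ r hr =>
  setIntegral_mono_set ((hf.integrableOn_isCompact (isCompact_closedBall c r)).mono_set
      ball_subset_closedBall) (.of_forall hf0) (ball_subset_ball hr).eventuallyLE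

theorem eventually_mul_log_le_of_tendsto {k : ℕ} (hk : 2 ≤ k) {I : ℝ → ℝ} (hI : Monotone I)
    (hI0 : ∀ R, 0 ≤ I R) {A A₀ : ℝ} (hA : A < A₀)
    (hlim : Tendsto (fun R => (log R)⁻¹ * ∫ ρ in Set.Ioc 1 R, (ρ ^ k)⁻¹ * I ρ) atTop (nhds A₀)) :
    ∀ᶠ R in atTop, ((k : ℝ) - 1) * A * log R ≤ I R := by
  have hk' : (0 : ℝ) < k - 1 := by
    have : (2 : ℝ) ≤ k := by exact_mod_cast hk
    linarith
  filter_upwards [hlim.eventually (eventually_gt_nhds hA), eventually_gt_atTop 1] with R hAR hR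
  have hlog : 0 < log R := log_pos hR
  have : A < (log R)⁻¹ * (I R / ((k : ℝ) - 1)) :=
    hAR.trans_le (mul_le_mul_of_nonneg_left (setIntegral_Ioc_one_inv_pow_mul_le hk hI (hI0 R))
      (inv_nonneg.mpr hlog.le))
  rw [inv_mul_eq_div, lt_div_iff₀ hlog, lt_div_iff₀ hk'] at this
  linarith

theorem stmt_1 (n : ℕ) (hn : 3 ≤ n)
    (f : EuclideanSpace ℝ (Fin n) → ℝ) (hf : Continuous f) (hf0 : ∀ x, 0 ≤ f x)
    (A₀ : ℝ) (hA₀ : 0 < A₀)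
    (hA : Tendsto (fun R : ℝ => (Real.log R)⁻¹ *
        ∫ ρ in Set.Ioc (1:ℝ) R, (ρ ^ (n-1))⁻¹ * ∫ x in ball (0 : EuclideanSpace ℝ (Fin n)) ρ, f x)
      atTop (nhds A₀)) :
    (∃ R₁ : ℝ, 1 < R₁ ∧ ∀ ρ ≥ R₁,
        ((n:ℝ) - 2) / 2 * A₀ * Real.log ρ ≤ ∫ x in ball (0 : EuclideanSpace ℝ (Fin n)) ρ, f x) ∧
      Tendsto (fun ρ : ℝ => ∫ x in ball (0 : EuclideanSpace ℝ (Fin n)) ρ, f x) atTop atTop := by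
  have hcast : ((n - 1 : ℕ) : ℝ) - 1 = n - 2 := by
    rw [Nat.cast_sub (by omega)]; ring
  have hn2 : (0 : ℝ) < n - 2 := by
    have : (3 : ℝ) ≤ n := by exact_mod_cast hn
    linarith
  have hlow : ∀ᶠ ρ in atTop,
      ((n:ℝ) - 2) / 2 * A₀ * log ρ ≤ ∫ x in ball (0 : EuclideanSpace ℝ (Fin n)) ρ, f x := by
    filter_upwards [eventually_mul_log_le_of_tendsto (by omega)
      (monotone_setIntegral_ball hf.locallyIntegrable hf0 0)
      (fun R => setIntegral_nonneg measurableSet_ball fun x _ => hf0 x) (half_lt_self hA₀) hA]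
      with ρ hρ
    rw [hcast] at hρ
    linarith
  obtain ⟨R₀, hR₀⟩ := eventually_atTop.mp hlow
  exact ⟨⟨max R₀ 2, one_lt_two.trans_le (le_max_right _ _),
      fun ρ hρ => hR₀ ρ (le_of_max_le_left hρ)⟩,
    tendsto_atTop_mono' _ hlow (tendsto_log_atTop.const_mul_atTop (by positivity))⟩
end

section
/- Let n ≥ 3 and let f : ℝⁿ → ℝ be continuous with 0 ≤ f(x) ≤ A₁/|x|² for all x ≠ 0 and some A₁ > 0. Then there is a constant C > 0 such that for all x with |x| ≥ 2, ∫_{|y| ≤ 2|x|} (|y|/|x−y|^{n−1}) f(y) dy ≤ C. -/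
/-!
Split the ball at the sphere `‖x - y‖ = ‖x‖ / 2`. Near `x` we have `‖y‖ ≥ ‖x‖ / 2`, so
`‖y‖ f y ≤ A / ‖y‖ ≤ 2A / ‖x‖`, while `∫_{‖x - y‖ ≤ ‖x‖/2} ‖x - y‖^{1-n}` is of order `‖x‖`.
Away from `x` the kernel is at most `(2 / ‖x‖)^{n-1}`, while `∫_{‖y‖ ≤ 2‖x‖} A / ‖y‖` is of order
`‖x‖^{n-1}`. Both radial integrals are computed in polar coordinates, and in each case the powers
of `‖x‖` cancel.
-/

open MeasureTheory Metric Set Module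
open scoped ENNReal

theorem lintegral_Ioc_ofReal_pow (m : ℕ) {R : ℝ} (hR : 0 ≤ R) :
    ∫⁻ r in Ioc 0 R, ENNReal.ofReal (r ^ m) = ENNReal.ofReal (R ^ (m + 1) / (m + 1)) := by
  rw [← ofReal_integral_eq_lintegral_ofReal (intervalIntegral.intervalIntegrable_pow m).1
      ((ae_restrict_iff' measurableSet_Ioc).2 (ae_of_all _ fun r hr => pow_nonneg hr.1.le m)),
    ← intervalIntegral.integral_of_le hR, integral_pow]
  simp

theorem ofReal_norm_div_norm_sub_pow_mul_le {E : Type*} [NormedAddCommGroup E] {f : E → ℝ}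
    {A : ℝ} (hA : 0 ≤ A) (k : ℕ) {x y : E} (hx : x ≠ 0) (hy : y ≠ 0)
    (hfy : f y ≤ A / ‖y‖ ^ 2) :
    ENNReal.ofReal (‖y‖ / ‖x - y‖ ^ k * f y) ≤
      (closedBall x (‖x‖ / 2)).indicator
          (fun z => ENNReal.ofReal (2 * A / ‖x‖) * ENNReal.ofReal (‖x - z‖ ^ k)⁻¹) y +
        ENNReal.ofReal (A * (2 / ‖x‖) ^ k) * ENNReal.ofReal ‖y‖⁻¹ := by
  have hy₀ : 0 < ‖y‖ := norm_pos_iff.2 hy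
  have hx₀ : 0 < ‖x‖ := norm_pos_iff.2 hx
  have hyf : ‖y‖ * f y ≤ A * ‖y‖⁻¹ := calc
    ‖y‖ * f y ≤ ‖y‖ * (A / ‖y‖ ^ 2) := by gcongr
    _ = A * ‖y‖⁻¹ := by field_simp
  have hsplit : ‖y‖ / ‖x - y‖ ^ k * f y = ‖y‖ * f y * (‖x - y‖ ^ k)⁻¹ := by ring
  by_cases hnear : y ∈ closedBall x (‖x‖ / 2)
  · have hnear' : ‖x‖ / 2 ≤ ‖y‖ := by
      rw [mem_closedBall, dist_eq_norm, norm_sub_rev] at hnear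
      linarith [norm_sub_norm_le x y]
    have hyx : A * ‖y‖⁻¹ ≤ 2 * A / ‖x‖ := by
      rw [← div_eq_mul_inv, div_le_div_iff₀ hy₀ hx₀]
      nlinarith
    rw [indicator_of_mem hnear, ← ENNReal.ofReal_mul (by positivity), hsplit]
    exact le_add_right (ENNReal.ofReal_le_ofReal (by gcongr; exact hyf.trans hyx))
  · have hfar : ‖x‖ / 2 < ‖x - y‖ := by
      rwa [mem_closedBall, dist_eq_norm, norm_sub_rev, not_le] at hnear
    have hfar' : (‖x - y‖ ^ k)⁻¹ ≤ (2 / ‖x‖) ^ k := by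
      rw [← inv_div, inv_pow]
      gcongr
    rw [indicator_of_notMem hnear, zero_add, ← ENNReal.ofReal_mul (by positivity), hsplit]
    refine ENNReal.ofReal_le_ofReal ?_
    calc ‖y‖ * f y * (‖x - y‖ ^ k)⁻¹ ≤ A * ‖y‖⁻¹ * (2 / ‖x‖) ^ k := by gcongr
      _ = A * (2 / ‖x‖) ^ k * ‖y‖⁻¹ := by ring

section Radial

variable {E : Type*} [NormedAddCommGroup E] [NormedSpace ℝ E] [MeasurableSpace E]
  [BorelSpace E] [FiniteDimensional ℝ E] (μ : Measure E) [μ.IsAddHaarMeasure]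

theorem lintegral_fun_norm_addHaar [Nontrivial E] {g : ℝ → ℝ≥0∞} (hg : Measurable g) :
    ∫⁻ x, g ‖x‖ ∂μ =
      μ.toSphere univ * ∫⁻ r in Ioi (0 : ℝ), ENNReal.ofReal (r ^ (finrank ℝ E - 1)) * g r := by
  have hmeas : Measurable fun p : sphere (0 : E) 1 × Ioi (0 : ℝ) => g p.2 :=
    hg.comp (measurable_subtype_coe.comp measurable_snd)
  calc
    ∫⁻ x, g ‖x‖ ∂μ = ∫⁻ x : ({(0 : E)}ᶜ : Set E), g ‖x.1‖ ∂(μ.comap (↑)) := by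
      rw [lintegral_subtype_comap (measurableSet_singleton 0).compl fun x => g ‖x‖,
        restrict_compl_singleton]
    _ = ∫⁻ p, g p.2 ∂(μ.toSphere.prod (.volumeIoiPow (finrank ℝ E - 1))) := by
      rw [← μ.measurePreserving_homeomorphUnitSphereProd.lintegral_comp hmeas]
      simp [homeomorphUnitSphereProd_apply_snd_coe]
    _ = μ.toSphere univ * ∫⁻ r, g r ∂(.volumeIoiPow (finrank ℝ E - 1)) := by
      rw [lintegral_prod _ hmeas.aemeasurable]
      simp [lintegral_const, mul_comm]
    _ = _ := by
      rw [← lintegral_subtype_comap measurableSet_Ioi, Measure.volumeIoiPow,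
        lintegral_withDensity_eq_lintegral_mul _ (g := fun r : Ioi (0 : ℝ) => g r)
          (measurable_subtype_coe.pow_const _).ennreal_ofReal (hg.comp measurable_subtype_coe)]
      rfl

theorem lintegral_closedBall_inv_norm_pow {k : ℕ} (hk : k < finrank ℝ E) {R : ℝ} (hR : 0 ≤ R) :
    ∫⁻ y in closedBall (0 : E) R, ENNReal.ofReal (‖y‖ ^ k)⁻¹ ∂μ =
      μ.toSphere univ *
        ENNReal.ofReal (R ^ (finrank ℝ E - k) / (finrank ℝ E - k : ℕ)) := by
  have : Nontrivial E := nontrivial_of_finrank_pos (R := ℝ) (by omega)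
  set g : ℝ → ℝ≥0∞ := (Iic R).indicator fun r => ENNReal.ofReal (r ^ k)⁻¹
  have hg : Measurable g :=
    ((measurable_id.pow_const k).inv.ennreal_ofReal).indicator measurableSet_Iic
  have hball : ∀ y : E, (closedBall 0 R).indicator (fun y => ENNReal.ofReal (‖y‖ ^ k)⁻¹) y =
      g ‖y‖ := fun y => by
    simp [g, indicator]
  have hradial : ∀ r ∈ Ioi (0 : ℝ), ENNReal.ofReal (r ^ (finrank ℝ E - 1)) * g r =
      (Iic R).indicator (fun r => ENNReal.ofReal (r ^ (finrank ℝ E - 1 - k))) r := by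
    intro r (hr : 0 < r)
    by_cases hrR : r ∈ Iic R
    · rw [show g r = _ from indicator_of_mem hrR _, indicator_of_mem hrR,
        ← ENNReal.ofReal_mul (by positivity),
        ← pow_sub₀ r hr.ne' (show k ≤ finrank ℝ E - 1 by omega)]
    · simp [g, hrR]
  rw [← lintegral_indicator measurableSet_closedBall, funext hball,
    lintegral_fun_norm_addHaar μ hg, setLIntegral_congr_fun measurableSet_Ioi hradial,
    lintegral_indicator measurableSet_Iic, Measure.restrict_restrict measurableSet_Iic, inter_comm,
    Ioi_inter_Iic, lintegral_Ioc_ofReal_pow _ hR, ← Nat.cast_add_one,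
    show finrank ℝ E - 1 - k + 1 = finrank ℝ E - k by omega]

theorem lintegral_closedBall_inv_norm_sub_pow (c : E) {k : ℕ} (hk : k < finrank ℝ E) {R : ℝ}
    (hR : 0 ≤ R) :
    ∫⁻ y in closedBall c R, ENNReal.ofReal (‖c - y‖ ^ k)⁻¹ ∂μ =
      μ.toSphere univ *
        ENNReal.ofReal (R ^ (finrank ℝ E - k) / (finrank ℝ E - k : ℕ)) := by
  have hpre : (c - ·) ⁻¹' closedBall (0 : E) R = closedBall c R := by
    ext y
    simp [dist_eq_norm, norm_sub_rev c y]
  rw [← hpre, ← lintegral_closedBall_inv_norm_pow μ hk hR]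
  exact (Measure.measurePreserving_sub_left μ c).setLIntegral_comp_preimage
    measurableSet_closedBall (measurable_norm.pow_const k).inv.ennreal_ofReal

theorem lintegral_closedBall_norm_div_norm_sub_pow_mul_le (hd : 2 ≤ finrank ℝ E) {f : E → ℝ}
    {A : ℝ} (hA : 0 ≤ A) (hf : ∀ y ≠ 0, f y ≤ A / ‖y‖ ^ 2) {x : E} (hx : x ≠ 0) :
    ∫⁻ y in closedBall 0 (2 * ‖x‖), ENNReal.ofReal (‖y‖ / ‖x - y‖ ^ (finrank ℝ E - 1) * f y) ∂μ ≤
      μ.toSphere univ *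
        ENNReal.ofReal (A * (1 + 4 ^ (finrank ℝ E - 1) / (finrank ℝ E - 1 : ℕ))) := by
  set d := finrank ℝ E
  have hx₀ : 0 < ‖x‖ := norm_pos_iff.2 hx
  set near : E → ℝ≥0∞ := (closedBall x (‖x‖ / 2)).indicator
    fun z => ENNReal.ofReal (2 * A / ‖x‖) * ENNReal.ofReal (‖x - z‖ ^ (d - 1))⁻¹
  have hnear_meas : Measurable near :=
    (((measurable_const.sub measurable_id).norm.pow_const _).inv.ennreal_ofReal.const_mul
      _).indicator measurableSet_closedBall
  have hnear : ∫⁻ y, near y ∂μ = μ.toSphere univ * ENNReal.ofReal A := by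
    rw [lintegral_indicator measurableSet_closedBall,
      lintegral_const_mul' _ _ ENNReal.ofReal_ne_top,
      lintegral_closedBall_inv_norm_sub_pow μ x (by omega) (by positivity),
      show d - (d - 1) = 1 by omega, mul_left_comm, ← ENNReal.ofReal_mul (by positivity)]
    congr 2
    field_simp
    norm_num
  have hfar : ∫⁻ y in closedBall 0 (2 * ‖x‖),
      ENNReal.ofReal (A * (2 / ‖x‖) ^ (d - 1)) * ENNReal.ofReal ‖y‖⁻¹ ∂μ =
        μ.toSphere univ * ENNReal.ofReal (A * 4 ^ (d - 1) / (d - 1 : ℕ)) := by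
    have hinv := lintegral_closedBall_inv_norm_pow μ (k := 1) (by omega) (R := 2 * ‖x‖)
      (by positivity)
    simp only [pow_one] at hinv
    rw [lintegral_const_mul' _ _ ENNReal.ofReal_ne_top, hinv, mul_left_comm,
      ← ENNReal.ofReal_mul (by positivity)]
    have h4 : (2 / ‖x‖) ^ (d - 1) * (2 * ‖x‖) ^ (d - 1) = 4 ^ (d - 1) := by
      rw [← mul_pow]
      field_simp
      norm_num
    congr 2
    rw [← h4]
    ring
  calc
    _ ≤ ∫⁻ y in closedBall 0 (2 * ‖x‖),
          near y + ENNReal.ofReal (A * (2 / ‖x‖) ^ (d - 1)) * ENNReal.ofReal ‖y‖⁻¹ ∂μ := by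
      refine lintegral_mono fun y => ?_
      rcases eq_or_ne y 0 with rfl | hy
      · simp
      · exact ofReal_norm_div_norm_sub_pow_mul_le hA (d - 1) hx hy (hf y hy)
    _ ≤ ∫⁻ y, near y ∂μ + μ.toSphere univ * ENNReal.ofReal (A * 4 ^ (d - 1) / (d - 1 : ℕ)) := by
      rw [lintegral_add_left hnear_meas, hfar]
      gcongr
      exact Measure.restrict_le_self
    _ = _ := by
      rw [hnear, ← mul_add, ← ENNReal.ofReal_add hA (by positivity), mul_one_add, mul_div_assoc]
end Radial

theorem stmt_6_general (n : ℕ) (hn : 3 ≤ n)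
    (f : EuclideanSpace ℝ (Fin n) → ℝ) (A₁ : ℝ) (hA₁ : 0 < A₁)
    (hbd : ∀ x : EuclideanSpace ℝ (Fin n), x ≠ 0 → 0 ≤ f x ∧ f x ≤ A₁ / ‖x‖ ^ 2) :
    ∃ C : ℝ, 0 < C ∧ ∀ x : EuclideanSpace ℝ (Fin n), 2 ≤ ‖x‖ →
      ∫ y in closedBall (0 : EuclideanSpace ℝ (Fin n)) (2 * ‖x‖),
        ‖y‖ / ‖x - y‖ ^ (n-1) * f y ≤ C := by
  have hdim : finrank ℝ (EuclideanSpace ℝ (Fin n)) = n := finrank_euclideanSpace_fin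
  have : Nontrivial (EuclideanSpace ℝ (Fin n)) :=
    nontrivial_of_finrank_pos (R := ℝ) (by omega)
  set σ := (volume : Measure (EuclideanSpace ℝ (Fin n))).toSphere univ
  have hσ : 0 < σ.toReal := ENNReal.toReal_pos
    (Measure.measure_univ_ne_zero.2 (Measure.toSphere_ne_zero _)) (measure_ne_top _ _)
  refine ⟨σ.toReal * (A₁ * (1 + 4 ^ (n - 1) / (n - 1 : ℕ))), by positivity, fun x hx => ?_⟩
  have hbound := lintegral_closedBall_norm_div_norm_sub_pow_mul_le volume (by omega) hA₁.le
    (fun y hy => (hbd y hy).2) (x := x) (norm_pos_iff.1 (by linarith))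
  rw [hdim] at hbound
  have hnonneg : ∀ y, 0 ≤ ‖y‖ / ‖x - y‖ ^ (n - 1) * f y := fun y => by
    rcases eq_or_ne y 0 with rfl | hy
    · simp
    · exact mul_nonneg (by positivity) (hbd y hy).1
  calc
    _ ≤ ‖∫ y in closedBall 0 (2 * ‖x‖), ‖y‖ / ‖x - y‖ ^ (n - 1) * f y‖ := Real.le_norm_self _
    _ ≤ _ := norm_integral_le_lintegral_norm _
    _ ≤ _ := by
      simp only [Real.norm_of_nonneg (hnonneg _)]
      refine ENNReal.toReal_le_of_le_ofReal (by positivity) (hbound.trans_eq ?_)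
      rw [ENNReal.ofReal_mul hσ.le, ENNReal.ofReal_toReal (measure_ne_top _ _)]

theorem stmt_6 (n : ℕ) (hn : 3 ≤ n)
    (f : EuclideanSpace ℝ (Fin n) → ℝ) (hf : Continuous f) (A₁ : ℝ) (hA₁ : 0 < A₁)
    (hbd : ∀ x : EuclideanSpace ℝ (Fin n), x ≠ 0 → 0 ≤ f x ∧ f x ≤ A₁ / ‖x‖ ^ 2) :
    ∃ C : ℝ, 0 < C ∧ ∀ x : EuclideanSpace ℝ (Fin n), 2 ≤ ‖x‖ →
      ∫ y in closedBall (0 : EuclideanSpace ℝ (Fin n)) (2 * ‖x‖),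
        ‖y‖ / ‖x - y‖ ^ (n-1) * f y ≤ C :=
  stmt_6_general n hn f A₁ hA₁ hbd
end

section
/- Let n ≥ 3, α > 2β, and suppose v is a C² radially symmetric solution of Δv + αe^v + βx·∇e^v = 0 in ℝⁿ (written v = v(r), r = |x|) satisfying lim_{r→∞} r² e^{v(r)} = 2(n−2)/(α−2β). Then lim_{r→∞} r v'(r) = −2. -/
open MeasureTheory Metric Filter
open scoped RealInnerProductSpace

noncomputable def lap {n : ℕ} (v : EuclideanSpace ℝ (Fin n) → ℝ)
    (x : EuclideanSpace ℝ (Fin n)) : ℝ :=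
  ∑ i : Fin n, fderiv ℝ (fun y => fderiv ℝ v y (EuclideanSpace.single i 1)) x
    (EuclideanSpace.single i 1)

/-! Writing `v x = ψ ‖x‖`, the radial formulas `Δv = ψ'' + (n - 1) ψ' / r` and
`x · ∇e^v = r (e^ψ)'` turn the equation into the ODE
`ψ'' + (n - 1) ψ' / r + α e^ψ + β r e^ψ ψ' = 0`, whose divergence form integrates to
`r^(n-1) ψ'(r) + β r^n e^ψ(r) = (n β - α) ∫₀^r t^(n-1) e^ψ(t) dt`.
Dividing by `r^(n-2)`, the right side is a weighted mean of `t² e^ψ(t) → L`, which tends to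
`L / (n - 2)`; hence `r ψ'(r) → (2 β - α) L / (n - 2) = -2`. -/

open Set Real
open scoped Topology

section RadialCalculus

variable {E : Type*} [NormedAddCommGroup E] [InnerProductSpace ℝ E] {f : ℝ → ℝ} {x : E}

theorem hasFDerivAt_norm (hx : x ≠ 0) : HasFDerivAt (‖·‖) (‖x‖⁻¹ • innerSL ℝ x) x := by
  have hsqrt : HasDerivAt Real.sqrt (1 / (2 * ‖x‖)) (‖x‖ ^ 2) := by
    simpa [Real.sqrt_sq (norm_nonneg x)] using
      Real.hasDerivAt_sqrt (pow_ne_zero 2 (norm_ne_zero_iff.2 hx))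
  have h := hsqrt.comp_hasFDerivAt x (hasStrictFDerivAt_norm_sq x).hasFDerivAt
  simp only [Function.comp_def, Real.sqrt_sq (norm_nonneg _)] at h
  refine h.congr_fderiv ?_
  ext y
  simp only [smul_apply, innerSL_apply_apply, smul_eq_mul, nsmul_eq_mul, Nat.cast_ofNat]
  field_simp

theorem HasDerivAt.hasFDerivAt_comp_norm {f' : ℝ} (hf : HasDerivAt f f' ‖x‖) (hx : x ≠ 0) :
    HasFDerivAt (fun y => f ‖y‖) ((f' / ‖x‖) • innerSL ℝ x) x := by
  have h := hf.comp_hasFDerivAt x (hasFDerivAt_norm hx)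
  rwa [smul_smul, ← div_eq_mul_inv] at h

theorem fderiv_comp_norm_apply (hf : DifferentiableAt ℝ f ‖x‖) (hx : x ≠ 0) (w : E) :
    fderiv ℝ (fun y => f ‖y‖) x w = deriv f ‖x‖ / ‖x‖ * ⟪x, w⟫ := by
  simp [(hf.hasDerivAt.hasFDerivAt_comp_norm hx).fderiv]

theorem inner_gradient_comp_norm [CompleteSpace E] (hf : DifferentiableAt ℝ f ‖x‖)
    (hx : x ≠ 0) : ⟪x, gradient (fun y => f ‖y‖) x⟫ = ‖x‖ * deriv f ‖x‖ := by
  rw [gradient, real_inner_comm, InnerProductSpace.toDual_symm_apply,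
    fderiv_comp_norm_apply hf hx, real_inner_self_eq_norm_sq]
  field_simp [norm_ne_zero_iff.2 hx]

theorem fderiv_fderiv_comp_norm_apply (hf : Differentiable ℝ f)
    (hf' : DifferentiableAt ℝ (deriv f) ‖x‖) (hx : x ≠ 0) (w w' : E) :
    fderiv ℝ (fun y => fderiv ℝ (fun z => f ‖z‖) y w) x w' =
      (deriv (deriv f) ‖x‖ - deriv f ‖x‖ / ‖x‖) * (⟪x, w⟫ * ⟪x, w'⟫) / ‖x‖ ^ 2
        + deriv f ‖x‖ / ‖x‖ * ⟪w, w'⟫ := by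
  have hx' : ‖x‖ ≠ 0 := norm_ne_zero_iff.2 hx
  have hfirst : (fun y => fderiv ℝ (fun z => f ‖z‖) y w) =ᶠ[𝓝 x]
      fun y => deriv f ‖y‖ / ‖y‖ * innerSL ℝ w y := by
    filter_upwards [isOpen_ne.mem_nhds hx] with y hy
    rw [fderiv_comp_norm_apply (hf _) hy, innerSL_apply_apply, real_inner_comm]
  have hquot : HasDerivAt (fun s => deriv f s / s)
      ((deriv (deriv f) ‖x‖ * ‖x‖ - deriv f ‖x‖ * 1) / ‖x‖ ^ 2) ‖x‖ :=
    hf'.hasDerivAt.div (hasDerivAt_id _) hx'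
  rw [hfirst.fderiv_eq, fderiv_fun_mul (hquot.hasFDerivAt_comp_norm hx).differentiableAt
    (innerSL ℝ w).differentiableAt, (hquot.hasFDerivAt_comp_norm hx).fderiv,
    (innerSL ℝ w).fderiv]
  simp only [add_apply, smul_apply, innerSL_apply_apply,
    smul_eq_mul, real_inner_comm w x, real_inner_comm w' w]
  field_simp
  ring

end RadialCalculus

theorem lap_comp_norm {n : ℕ} {f : ℝ → ℝ} {x : EuclideanSpace ℝ (Fin n)}
    (hf : Differentiable ℝ f) (hf' : DifferentiableAt ℝ (deriv f) ‖x‖) (hx : x ≠ 0) :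
    lap (fun y => f ‖y‖) x = deriv (deriv f) ‖x‖ + (n - 1) * (deriv f ‖x‖ / ‖x‖) := by
  have hparseval : ∑ i : Fin n, ⟪x, EuclideanSpace.single i 1⟫ * ⟪x, EuclideanSpace.single i 1⟫
      = ‖x‖ ^ 2 := by
    simpa [real_inner_comm x, real_inner_self_eq_norm_sq] using
      (EuclideanSpace.basisFun (Fin n) ℝ).sum_inner_mul_inner x x
  simp only [lap, fderiv_fderiv_comp_norm_apply hf hf' hx, Finset.sum_add_distrib,
    ← Finset.sum_div, ← Finset.mul_sum, hparseval]
  simp only [real_inner_self_eq_norm_sq, PiLp.norm_single, norm_one, one_pow,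
    Finset.sum_const, Finset.card_univ, Fintype.card_fin, nsmul_eq_mul]
  field_simp [norm_ne_zero_iff.2 hx]
  ring

theorem radial_ode_of_pde {n : ℕ} (hn : 0 < n) {α β : ℝ} {ψ : ℝ → ℝ} (hψ : ContDiff ℝ 2 ψ)
    (hpde : ∀ x : EuclideanSpace ℝ (Fin n), lap (fun y => ψ ‖y‖) x + α * exp (ψ ‖x‖) +
      β * ⟪x, gradient (fun y => exp (ψ ‖y‖)) x⟫ = 0)
    {r : ℝ} (hr : 0 < r) :
    deriv (deriv ψ) r + (n - 1) * (deriv ψ r / r) + α * exp (ψ r)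
      + β * (r * (exp (ψ r) * deriv ψ r)) = 0 := by
  set x : EuclideanSpace ℝ (Fin n) := r • EuclideanSpace.single ⟨0, hn⟩ 1
  have hxr : ‖x‖ = r := by simp [x, norm_smul, hr.le]
  have hx : x ≠ 0 := norm_ne_zero_iff.1 (hxr ▸ hr.ne')
  have hψ1 : Differentiable ℝ ψ := hψ.differentiable (by norm_num)
  have h := hpde x
  rwa [lap_comp_norm hψ1 (hψ.differentiable_deriv_two _) hx,
    inner_gradient_comp_norm (hψ1 _).exp hx, hxr, deriv_exp (hψ1 r)] at h

theorem integral_identity_of_radial_ode {n : ℕ} (hn : 2 ≤ n) {α β : ℝ} {ψ : ℝ → ℝ}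
    (hψ : ContDiff ℝ 2 ψ)
    (hode : ∀ r > 0, deriv (deriv ψ) r + (n - 1) * (deriv ψ r / r) + α * exp (ψ r)
      + β * (r * (exp (ψ r) * deriv ψ r)) = 0)
    {r : ℝ} (hr : 0 ≤ r) :
    r ^ (n - 1) * deriv ψ r + β * (r ^ n * exp (ψ r)) =
      (n * β - α) * ∫ t in 0..r, t ^ (n - 1) * exp (ψ t) := by
  obtain ⟨k, rfl⟩ := Nat.exists_eq_add_of_le' hn
  rw [show k + 2 - 1 = k + 1 from rfl]
  push_cast at hode ⊢
  set F : ℝ → ℝ := fun t => t ^ (k + 1) * deriv ψ t + β * (t ^ (k + 2) * exp (ψ t))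
  have hψ1 : Differentiable ℝ ψ := hψ.differentiable (by norm_num)
  have hFcont : Continuous F :=
    ((continuous_pow _).mul (hψ.continuous_deriv one_le_two)).add
      (continuous_const.mul ((continuous_pow _).mul (continuous_exp.comp hψ.continuous)))
  have hF' : ∀ t ∈ Ioo 0 r,
      HasDerivAt F (((k + 2 : ℝ) * β - α) * (t ^ (k + 1) * exp (ψ t))) t := by
    rintro t ⟨ht, -⟩
    have h := ((hasDerivAt_pow (k + 1) t).mul (hψ.differentiable_deriv_two t).hasDerivAt).add
      (((hasDerivAt_pow (k + 2) t).mul (hψ1 t).hasDerivAt.exp).const_mul β)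
    refine h.congr_deriv ?_
    have hode_t := hode t ht
    field_simp at hode_t
    push_cast
    linear_combination t ^ k * hode_t
  have hFTC := intervalIntegral.integral_eq_sub_of_hasDerivAt_of_le hr hFcont.continuousOn hF'
    ((continuous_const.mul ((continuous_pow _).mul
      (continuous_exp.comp hψ.continuous))).intervalIntegrable _ _)
  simpa [F, intervalIntegral.integral_const_mul] using hFTC.symm

theorem Continuous.exists_forall_norm_le_of_tendsto_atTop {E : Type*} [NormedAddCommGroup E]
    {g : ℝ → E} {L : E} (hg : Continuous g) (hgL : Tendsto g atTop (𝓝 L)) (a : ℝ) :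
    ∃ B, ∀ t, a ≤ t → ‖g t‖ ≤ B := by
  obtain ⟨R, hR⟩ := eventually_atTop.1 (hgL.norm.eventually (gt_mem_nhds (lt_add_one ‖L‖)))
  obtain ⟨C, hC⟩ := (isCompact_Icc (a := a) (b := R)).exists_bound_of_continuousOn hg.continuousOn
  refine ⟨max C (‖L‖ + 1), fun t ht => ?_⟩
  rcases le_total t R with h | h
  · exact (hC t ⟨ht, h⟩).trans (le_max_left _ _)
  · exact (hR t h).le.trans (le_max_right _ _)

theorem integral_pow_mul_div_pow_eq_integral_comp_mul {g : ℝ → ℝ} (k : ℕ) {r : ℝ} (hr : r ≠ 0) :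
    (∫ t in 0..r, t ^ k * g t) / r ^ (k + 1) = ∫ s in 0..1, s ^ k * g (r * s) := by
  have h := intervalIntegral.integral_comp_mul_left (fun t => t ^ k * g t) hr (a := 0) (b := 1)
  simp only [mul_zero, mul_one, mul_pow, mul_assoc, intervalIntegral.integral_const_mul,
    smul_eq_mul] at h
  rw [pow_succ, ← div_div, div_eq_inv_mul _ r, ← mul_div_assoc, ← h]
  field_simp

theorem tendsto_integral_pow_mul_div_pow {g : ℝ → ℝ} {L : ℝ} (hg : Continuous g)
    (hgL : Tendsto g atTop (𝓝 L)) (k : ℕ) :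
    Tendsto (fun r => (∫ t in 0..r, t ^ k * g t) / r ^ (k + 1)) atTop (𝓝 (L / (k + 1))) := by
  obtain ⟨B, hB⟩ := hg.exists_forall_norm_le_of_tendsto_atTop hgL 0
  have hlimit : ∫ s in (0 : ℝ)..1, s ^ k * L = L / (k + 1) := by
    simp only [intervalIntegral.integral_mul_const, integral_pow, one_pow, zero_pow k.succ_ne_zero,
      sub_zero]
    field_simp
  rw [← hlimit]
  refine Tendsto.congr' (eventually_gt_atTop 0 |>.mono fun r hr =>
    (integral_pow_mul_div_pow_eq_integral_comp_mul k hr.ne').symm) ?_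
  refine intervalIntegral.tendsto_integral_filter_of_dominated_convergence (fun _ => B)
    (Eventually.of_forall fun r => ((continuous_pow k).mul
      (hg.comp (continuous_const.mul continuous_id))).aestronglyMeasurable) ?_
    intervalIntegrable_const ?_
  · filter_upwards [eventually_ge_atTop 0] with r hr
    refine Eventually.of_forall fun s hs => ?_
    rw [uIoc_of_le zero_le_one] at hs
    rw [norm_mul, norm_pow, Real.norm_of_nonneg hs.1.le]
    exact (mul_le_of_le_one_left (norm_nonneg _) (pow_le_one₀ hs.1.le hs.2)).trans
      (hB _ (mul_nonneg hr hs.1.le))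
  · refine Eventually.of_forall fun s hs => ?_
    rw [uIoc_of_le zero_le_one] at hs
    exact tendsto_const_nhds.mul (hgL.comp (tendsto_id.atTop_mul_const hs.1))

theorem tendsto_mul_deriv_of_radial_ode {n : ℕ} (hn : 3 ≤ n) {α β L : ℝ} {ψ : ℝ → ℝ}
    (hψ : ContDiff ℝ 2 ψ)
    (hode : ∀ r > 0, deriv (deriv ψ) r + (n - 1) * (deriv ψ r / r) + α * exp (ψ r)
      + β * (r * (exp (ψ r) * deriv ψ r)) = 0)
    (hlim : Tendsto (fun r => r ^ 2 * exp (ψ r)) atTop (𝓝 L)) :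
    Tendsto (fun r => r * deriv ψ r) atTop (𝓝 ((2 * β - α) * L / (n - 2))) := by
  obtain ⟨k, rfl⟩ : ∃ k, n = k + 3 := ⟨n - 3, by omega⟩
  have hid : ∀ r, 0 ≤ r → r ^ (k + 2) * deriv ψ r + β * (r ^ (k + 3) * exp (ψ r)) =
      ((k + 3 : ℕ) * β - α) * ∫ t in 0..r, t ^ k * (t ^ 2 * exp (ψ t)) := fun r hr => by
    have hpow : ∀ t : ℝ, t ^ k * (t ^ 2 * exp (ψ t)) = t ^ (k + 2) * exp (ψ t) := fun t => by ring
    simp only [hpow]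
    exact integral_identity_of_radial_ode (by omega) hψ hode hr
  have hmean := tendsto_integral_pow_mul_div_pow (g := fun t => t ^ 2 * exp (ψ t))
    ((continuous_pow 2).mul (continuous_exp.comp hψ.continuous)) hlim k
  have hval : ((k + 3 : ℕ) * β - α) * (L / (k + 1)) - β * L =
      (2 * β - α) * L / ((k + 3 : ℕ) - 2) := by
    rw [show ((k + 3 : ℕ) : ℝ) - 2 = k + 1 by push_cast; ring]
    field_simp
    push_cast
    ring
  rw [← hval]
  refine ((hmean.const_mul _).sub (hlim.const_mul β)).congr' ?_
  filter_upwards [eventually_gt_atTop 0] with r hr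
  have h := hid r hr.le
  generalize (∫ t in 0..r, t ^ k * (t ^ 2 * exp (ψ t))) = I at h ⊢
  field_simp
  linear_combination -h

theorem stmt_18 (n : ℕ) (hn : 3 ≤ n) (α β : ℝ) (hαβ : 2 * β < α)
    (v : EuclideanSpace ℝ (Fin n) → ℝ) (hv : ContDiff ℝ 2 v)
    (hpde : ∀ x : EuclideanSpace ℝ (Fin n),
      lap v x + α * Real.exp (v x) +
        β * ⟪x, gradient (fun y => Real.exp (v y)) x⟫ = 0)
    (φ : ℝ → ℝ) (hradial : ∀ x : EuclideanSpace ℝ (Fin n), v x = φ ‖x‖)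
    (hlim : Tendsto (fun r : ℝ => r ^ 2 * Real.exp (φ r)) atTop
      (nhds (2 * ((n : ℝ) - 2) / (α - 2 * β)))) :
    Tendsto (fun r : ℝ => r * deriv φ r) atTop (nhds (-2)) := by
  -- `φ` is arbitrary on `(-∞, 0)`; the profile `ψ` agrees with it on `[0, ∞)` and is `C²`.
  set ψ : ℝ → ℝ := fun t => v (t • EuclideanSpace.single ⟨0, by omega⟩ 1)
  have hψ : ContDiff ℝ 2 ψ := hv.comp (contDiff_id.smul contDiff_const)
  have hψφ : ∀ t, 0 ≤ t → ψ t = φ t := fun t ht => by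
    simp [ψ, hradial, norm_smul, abs_of_nonneg ht]
  have hvψ : v = fun x => ψ ‖x‖ := funext fun x => by rw [hradial, hψφ _ (norm_nonneg x)]
  simp only [hvψ] at hpde
  have hode := fun r (hr : 0 < r) => radial_ode_of_pde (by omega) hψ hpde hr
  have hlimψ : Tendsto (fun r => r ^ 2 * exp (ψ r)) atTop (𝓝 _) :=
    hlim.congr' (by filter_upwards [eventually_ge_atTop 0] with r hr; rw [hψφ r hr])
  have hval : (2 * β - α) * (2 * ((n : ℝ) - 2) / (α - 2 * β)) / (n - 2) = -2 := by
    have : (3 : ℝ) ≤ n := by exact_mod_cast hn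
    have : (n : ℝ) - 2 ≠ 0 := by linarith
    have : α - 2 * β ≠ 0 := by linarith
    field_simp
    ring
  rw [← hval]
  refine (tendsto_mul_deriv_of_radial_ode hn hψ hode hlimψ).congr' ?_
  filter_upwards [eventually_gt_atTop 0] with r hr
  have hψφ_near : ψ =ᶠ[𝓝 r] φ := by
    filter_upwards [eventually_gt_nhds hr] with s hs using hψφ s hs.le
  rw [hψφ_near.deriv_eq]
end
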